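/- For coprime positive integers a, b, the number of large (a,b)-Schröder paths with exactly i diagonal steps is Sch(a,b,i) = (1/a)·C(a,i)·C(a+b−1−i, b−i) = (1/b)·C(b,i)·C(a+b−1−i, a−i). -/

import Mathlib

/-- Steps of a (Schröder) lattice path: north, east, diagonal. -/
inductive Step : Type
  | N | E | D
deriving DecidableEq, Repr

/-- Total horizontal displacement of a path. -/
def eLen (p : List Step) : ℕ := p.count Step.E + p.count Step.D

/-- Total vertical displacement of a path. -/
def nLen (p : List Step) : ℕ := p.count Step.N + p.count Step.D

/-- A lattice path uses only `N` and `E` steps. -/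
def IsLatticePath (ν : List Step) : Prop := Step.D ∉ ν

/-- `colVal p x` is twice the starting height of the step of `p` crossing the vertical
strip between abscissas `x` and `x+1`, plus `1` if that step is diagonal.  Comparing these
values columnwise is equivalent to comparing the heights of the paths over each strip. -/
def colVal : List Step → ℕ → ℕ
  | [], _ => 0
  | Step.N :: p, x => colVal p x + 2
  | Step.E :: _, 0 => 0
  | Step.E :: p, x+1 => colVal p x
  | Step.D :: _, 0 => 1
  | Step.D :: p, x+1 => colVal p x + 2

/-- `π` stays weakly above `ρ` (same endpoints intended). -/
def WeaklyAbove (π ρ : List Step) : Prop := ∀ x, colVal ρ x ≤ colVal π x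

/-- Replace every peak (consecutive `NE`) of a path by a diagonal step; applied to `ν`
this gives the path `μ` of the large ν-Schröder path definition. -/
def cutPeaks : List Step → List Step
  | [] => []
  | Step.N :: Step.E :: p => Step.D :: cutPeaks p
  | s :: p => s :: cutPeaks p

/-- A ν-Dyck path: an `N,E` path with the same endpoints as `ν` staying weakly above `ν`. -/
def IsNuDyck (ν π : List Step) : Prop :=
  Step.D ∉ π ∧ eLen π = eLen ν ∧ nLen π = nLen ν ∧ WeaklyAbove π ν

/-- A (small) ν-Schröder path: an `N,E,D` path with the same endpoints as `ν` staying weakly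
above `ν` (this automatically forbids diagonal steps on the ν-diagonal). -/
def IsSmallSchroder (ν π : List Step) : Prop :=
  eLen π = eLen ν ∧ nLen π = nLen ν ∧ WeaklyAbove π ν

/-- A large ν-Schröder path: an `N,E,D` path with the same endpoints as `ν` staying weakly
above the path obtained from `ν` by replacing each peak by a diagonal step. -/
def IsLargeSchroder (ν π : List Step) : Prop :=
  eLen π = eLen ν ∧ nLen π = nLen ν ∧ WeaklyAbove π (cutPeaks ν)

/-- Number of peaks (consecutive `NE` pairs). -/
def peaks (p : List Step) : ℕ := (p.zip p.tail).count (Step.N, Step.E)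

/-- Number of valleys (consecutive `EN` pairs). -/
def valleys (p : List Step) : ℕ := (p.zip p.tail).count (Step.E, Step.N)

/-- Lattice points at which valleys of a path occur (starting the path at `(x,y)`). -/
def valleyPts : List Step → ℕ → ℕ → List (ℕ × ℕ)
  | [], _, _ => []
  | Step.E :: p, x, y =>
      (if p.head? = some Step.N then [(x+1, y)] else []) ++ valleyPts p (x+1) y
  | Step.N :: p, x, y => valleyPts p x (y+1)
  | Step.D :: p, x, y => valleyPts p (x+1) (y+1)

/-- Lattice points at which high peaks (peaks strictly above `ν`) of a path occur. -/
def highPeakPts (ν : List Step) : List Step → ℕ → ℕ → List (ℕ × ℕ)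
  | [], _, _ => []
  | Step.N :: p, x, y =>
      (if p.head? = some Step.E ∧ colVal ν x < 2*(y+1) then [(x, y+1)] else []) ++
        highPeakPts ν p x (y+1)
  | Step.E :: p, x, y => highPeakPts ν p (x+1) y
  | Step.D :: p, x, y => highPeakPts ν p (x+1) (y+1)

/-- Number of high peaks of `π` relative to `ν`. -/
def highPeaks (ν π : List Step) : ℕ := (highPeakPts ν π 0 0).length

/-- j-th ν-Narayana number: number of ν-Dyck paths with exactly `j` valleys. -/
noncomputable def Nar (ν : List Step) (j : ℕ) : ℕ :=
  Nat.card {π : List Step // IsNuDyck ν π ∧ valleys π = j}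

/-- Number of small ν-Schröder paths with exactly `i` diagonal steps. -/
noncomputable def schNum (ν : List Step) (i : ℕ) : ℕ :=
  Nat.card {π : List Step // IsSmallSchroder ν π ∧ π.count Step.D = i}

/-- `lowH ν x` is the lowest height of a point of `ν` at abscissa `x`. -/
def lowH : List Step → ℕ → ℕ
  | _, 0 => 0
  | [], _+1 => 0
  | Step.N :: p, x+1 => lowH p (x+1) + 1
  | Step.E :: p, x+1 => lowH p x
  | Step.D :: p, x+1 => lowH p x + 1

/-- The lowest lattice path from `(0,0)` to `(b,a)` weakly above the line segment
from `(0,0)` to `(b,a)`. -/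
def nuAB (a b : ℕ) : List Step :=
  (List.range b).flatMap (fun x =>
    List.replicate (((x+1)*a + b - 1)/b - (x*a + b - 1)/b) Step.N ++ [Step.E])

/-- Number of large rational `(a,b)`-Schröder paths with `i` diagonal steps. -/
noncomputable def largeCount (a b i : ℕ) : ℕ :=
  Nat.card {π : List Step // IsLargeSchroder (nuAB a b) π ∧ π.count Step.D = i}

/-- Number of small rational `(a,b)`-Schröder paths with `i` diagonal steps. -/
noncomputable def smallCount (a b i : ℕ) : ℕ :=
  Nat.card {π : List Step // IsSmallSchroder (nuAB a b) π ∧ π.count Step.D = i}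

/-- Binomial coefficient with an integer lower entry (zero when negative). -/
def chooseZ (n : ℕ) (k : ℤ) : ℕ := if 0 ≤ k then n.choose k.toNat else 0

/-- The region weakly above `ν` in the rectangle `[0,b] × [0,a]`. -/
def InRegion (ν : List Step) (p : ℕ × ℕ) : Prop :=
  p.1 ≤ eLen ν ∧ p.2 ≤ nLen ν ∧ lowH ν p.1 ≤ p.2

/-- Two points of the region are ν-incompatible if one is strictly southwest of the other and
the rectangle they span lies in the region (equivalently its bottom-right corner does). -/
def Incompat (ν : List Step) (p q : ℕ × ℕ) : Prop :=
  ((p.1 < q.1 ∧ p.2 < q.2) ∨ (q.1 < p.1 ∧ q.2 < p.2)) ∧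
    InRegion ν (max p.1 q.1, min p.2 q.2)

/-- A ν-binary tree: a maximal set of pairwise ν-compatible points of the region. -/
def IsBinaryTree (ν : List Step) (T : Finset (ℕ × ℕ)) : Prop :=
  (∀ p ∈ T, InRegion ν p) ∧ (∀ p ∈ T, ∀ q ∈ T, ¬ Incompat ν p q) ∧
    ∀ r, InRegion ν r → (∀ p ∈ T, ¬ Incompat ν r p) → r ∈ T

/-- A ν-Schröder tree: pairwise ν-compatible points of the region containing the root
`(0,a)` and meeting every row and every column. -/
def IsSchroderTree (ν : List Step) (T : Finset (ℕ × ℕ)) : Prop :=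
  (∀ p ∈ T, InRegion ν p) ∧ (∀ p ∈ T, ∀ q ∈ T, ¬ Incompat ν p q) ∧
    (0, nLen ν) ∈ T ∧ (∀ y ≤ nLen ν, ∃ p ∈ T, p.2 = y) ∧ (∀ x ≤ eLen ν, ∃ p ∈ T, p.1 = x)

/-- One contraction step: delete a node, provided the result is still a ν-Schröder tree. -/
def ContractStep (ν : List Step) (T T' : Finset (ℕ × ℕ)) : Prop :=
  ∃ q ∈ T, T' = T.erase q ∧ IsSchroderTree ν T'

/-- `p` is a leaf of the (plane tree associated to the) node set `T`: no node strictly below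
it in its column and none strictly to its right in its row. -/
def IsLeafIn (T : Finset (ℕ × ℕ)) (p : ℕ × ℕ) : Prop :=
  (∀ q ∈ T, ¬(q.1 = p.1 ∧ q.2 < p.2)) ∧ (∀ q ∈ T, ¬(q.2 = p.2 ∧ p.1 < q.1))

/-- Starting points of vertical runs and ending points of horizontal runs of `ν`. -/
def leafPts (ν : List Step) : Finset (ℕ × ℕ) :=
  (valleyPts ν 0 0).toFinset ∪ (if ν.head? = some Step.N then {((0 : ℕ), (0 : ℕ))} else ∅) ∪
    (if ν.getLast? = some Step.E then {(eLen ν, nLen ν)} else ∅)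

/-- `horizNu ν x y`: maximal number of east steps that can be placed starting at `(x,y)`
before crossing `ν` (staying within the bounding rectangle). -/
def horizNu (ν : List Step) (x y : ℕ) : ℕ :=
  ((Finset.Icc 1 (eLen ν - x)).filter (fun k => lowH ν (x + k) ≤ y)).card

/-- No `N` step of the given path (started at `(x,y)`) has initial point with
`horizNu`-value `h`. -/
def noNAt (ν : List Step) (h : ℕ) : List Step → ℕ → ℕ → Prop
  | [], _, _ => True
  | Step.N :: p, x, y => horizNu ν x y ≠ h ∧ noNAt ν h p x (y+1)
  | Step.E :: p, x, y => noNAt ν h p (x+1) y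
  | Step.D :: p, x, y => noNAt ν h p (x+1) (y+1)

/-- Right contraction: replace a consecutive `EN` pair (a valley) by a `D` step. -/
def RightC (μ lam : List Step) : Prop :=
  ∃ p q, μ = p ++ Step.E :: Step.N :: q ∧ lam = p ++ Step.D :: q

/-- Left contraction: delete an `E` step together with the most recent preceding `N` step
whose initial point has the same `horizNu` statistic as the initial point of the `E` step,
shift the intermediate subpath, and place a `D` step at the initial point of the `N` step. -/
def LeftC (ν μ lam : List Step) : Prop :=
  ∃ p m q, μ = p ++ Step.N :: (m ++ Step.E :: q) ∧ lam = p ++ Step.D :: (m ++ q) ∧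
    horizNu ν (eLen p) (nLen p)
      = horizNu ν (eLen (p ++ Step.N :: m)) (nLen (p ++ Step.N :: m)) ∧
    noNAt ν (horizNu ν (eLen (p ++ Step.N :: m)) (nLen (p ++ Step.N :: m)))
      m (eLen p) (nLen p + 1)

/-- Diagonal contraction: delete an `E` step ending at the initial point `r` of a `D` step,
together with the most recent preceding `N` step whose initial point `s` satisfies
`horizNu s = horizNu r`, shift the intermediate subpath, and place a `D` step at `s`. -/
def DiagC (ν μ lam : List Step) : Prop :=
  ∃ p m q, μ = p ++ Step.N :: (m ++ Step.E :: Step.D :: q) ∧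
    lam = p ++ Step.D :: (m ++ Step.D :: q) ∧
    horizNu ν (eLen p) (nLen p)
      = horizNu ν (eLen (p ++ Step.N :: m) + 1) (nLen (p ++ Step.N :: m)) ∧
    noNAt ν (horizNu ν (eLen (p ++ Step.N :: m) + 1) (nLen (p ++ Step.N :: m)))
      m (eLen p) (nLen p + 1)

/-- Cover relation of the contraction poset of ν-Schröder paths. -/
def Covers (ν μ lam : List Step) : Prop :=
  IsSmallSchroder ν μ ∧ IsSmallSchroder ν lam ∧
    (RightC μ lam ∨ LeftC ν μ lam ∨ DiagC ν μ lam)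

/-- The Morse matching: `σ` (having a `D` step preceded by no valley) is matched with the
path `π` obtained by replacing the first such `D` step by `EN`. -/
def MorseM (ν : List Step) : Set (List Step × List Step) :=
  { z | ∃ p q, Step.D ∉ p ∧ valleys p = 0 ∧
      z.2 = p ++ Step.D :: q ∧ z.1 = p ++ Step.E :: Step.N :: q ∧ IsSmallSchroder ν z.2 }

/-- Twice the area between a small ν-Schröder path and `ν`. -/
def area2 (ν π : List Step) : ℕ :=
  ∑ x ∈ Finset.range (eLen ν), (colVal π x - colVal ν x)

/-- An `(I,J̄)`-forest: increasing, non-crossing arcs. -/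
def IsIJForest (I J : Finset ℕ) (F : Finset (ℕ × ℕ)) : Prop :=
  (∀ a ∈ F, a.1 ∈ I ∧ a.2 ∈ J ∧ a.1 < a.2) ∧
    (∀ a ∈ F, ∀ a' ∈ F, ¬(a.1 < a'.1 ∧ a'.1 < a.2 ∧ a.2 < a'.2))

/-- A covering `(I,J̄)`-forest: contains the arc `(1,n)` and has no isolated node. -/
def IsCoveringForest (n : ℕ) (I J : Finset ℕ) (F : Finset (ℕ × ℕ)) : Prop :=
  IsIJForest I J F ∧ (1, n) ∈ F ∧
    (∀ i ∈ I, ∃ a ∈ F, a.1 = i) ∧ (∀ j ∈ J, ∃ a ∈ F, a.2 = j)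

/-- The lattice path read off from the interleaving of `I` and `J̄` (elements `2,…,n-1`,
`E` for elements of `I`, `N` for the others). -/
def nuOf (n : ℕ) (I : Finset ℕ) : List Step :=
  (List.range' 2 (n - 2)).map (fun k => if k ∈ I then Step.E else Step.N)

/-!
A large `(a,b)`-Schröder path has to stay weakly above the path obtained from `ν(a,b)` by
cutting its peaks, and for the rational `ν(a,b)` this means that every prefix ends weakly above
the line `b y = a x`. Give the steps the weights `N ↦ b`, `E ↦ -a`, `D ↦ b - a`: the paths with
`i` diagonal steps are the words with `a - i` letters `N`, `b - i` letters `E` and `i` letters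
`D`, and the large Schröder paths among them are those with nonnegative prefix sums. Such a word
has total weight `0`, and since `a` and `b` are coprime its proper prefixes have pairwise
distinct weights, so by the cycle lemma exactly one of its `a + b - i` rotations is a large
Schröder path. Hence `(a + b - i) · Sch(a,b,i) = (a + b - i)! / ((a - i)! (b - i)! i!)`, which
rearranges to both formulas.
-/

open List Nat

@[simp] lemma eLen_nil : eLen [] = 0 := rfl
@[simp] lemma nLen_nil : nLen [] = 0 := rfl

@[simp] lemma eLen_cons (s : Step) (p : List Step) :
    eLen (s :: p) = eLen p + if s = Step.N then 0 else 1 := by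
  cases s <;> simp [eLen] <;> omega

@[simp] lemma nLen_cons (s : Step) (p : List Step) :
    nLen (s :: p) = nLen p + if s = Step.E then 0 else 1 := by
  cases s <;> simp [nLen] <;> omega

@[simp] lemma eLen_append (p q : List Step) : eLen (p ++ q) = eLen p + eLen q := by
  simp only [eLen, count_append]; omega

@[simp] lemma nLen_append (p q : List Step) : nLen (p ++ q) = nLen p + nLen q := by
  simp only [nLen, count_append]; omega

@[simp] lemma eLen_replicate_N (k : ℕ) : eLen (replicate k Step.N) = 0 := by
  simp [eLen, count_replicate]

@[simp] lemma nLen_replicate_N (k : ℕ) : nLen (replicate k Step.N) = k := by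
  simp [nLen, count_replicate]

lemma length_eq_count_add (p : List Step) :
    p.length = p.count Step.N + p.count Step.E + p.count Step.D := by
  induction p with
  | nil => rfl
  | cons s p ih => cases s <;> simp [ih] <;> omega

lemma eq_nil_of_eLen_eq_zero_of_nLen_eq_zero {p : List Step} (he : eLen p = 0)
    (hn : nLen p = 0) : p = [] := by
  rw [← length_eq_zero_iff, length_eq_count_add]
  unfold eLen at he
  unfold nLen at hn
  omega

lemma List.Sublist.length_eq_of_eLen_eq_of_nLen_eq {p q : List Step} (h : p <+ q)
    (he : eLen p = eLen q) (hn : nLen p = nLen q) : p.length = q.length := by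
  have := h.count_le Step.N
  have := h.count_le Step.E
  have := h.count_le Step.D
  rw [length_eq_count_add, length_eq_count_add]
  unfold eLen at he
  unfold nLen at hn
  omega

lemma eLen_cutPeaks (p : List Step) : eLen (cutPeaks p) = eLen p := by
  induction p using cutPeaks.induct <;> simp_all [cutPeaks]

lemma nLen_cutPeaks (p : List Step) : nLen (cutPeaks p) = nLen p := by
  induction p using cutPeaks.induct <;> simp_all [cutPeaks]

lemma colVal_append_cons (p : List Step) {s : Step} (hs : s ≠ Step.N) (q : List Step) :
    colVal (p ++ s :: q) (eLen p) = 2 * nLen p + if s = Step.D then 1 else 0 := by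
  induction p with
  | nil => cases s <;> simp_all [colVal]
  | cons t p ih => cases t <;> simp [colVal, ih] <;> omega

lemma exists_eq_append_cons_of_lt_eLen {p : List Step} {x : ℕ} (hx : x < eLen p) :
    ∃ t s q, p = t ++ s :: q ∧ s ≠ Step.N ∧ eLen t = x := by
  induction p generalizing x with
  | nil => simp at hx
  | cons s p ih =>
    by_cases hs : s = Step.N
    · subst hs
      obtain ⟨t, s, q, rfl, hs, rfl⟩ := ih (x := x) (by simpa using hx)
      exact ⟨Step.N :: t, s, q, rfl, hs, by simp⟩
    · cases x with
      | zero => exact ⟨[], s, p, rfl, hs, rfl⟩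
      | succ x =>
        obtain ⟨t, s', q, rfl, hs', rfl⟩ := ih (x := x) (by simp [hs] at hx; omega)
        exact ⟨s :: t, s', q, rfl, hs', by simp [hs]⟩

lemma colVal_of_eLen_le {p : List Step} {x : ℕ} (hx : eLen p ≤ x) : colVal p x = 2 * nLen p := by
  induction p generalizing x with
  | nil => rfl
  | cons s p ih =>
    cases s <;> cases x <;> simp_all [colVal] <;> omega

lemma colVal_replicate_append (k : ℕ) (p : List Step) (x : ℕ) :
    colVal (replicate k Step.N ++ p) x = 2 * k + colVal p x := by
  induction k with
  | zero => simp
  | succ k ih => simp [replicate_succ, colVal, ih]; omega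

lemma cutPeaks_replicate_succ_append (m : ℕ) (p : List Step) :
    cutPeaks (replicate (m + 1) Step.N ++ Step.E :: p) =
      replicate m Step.N ++ Step.D :: cutPeaks p := by
  induction m with
  | zero => rfl
  | succ m ih => simpa [replicate_succ, cutPeaks] using ih

lemma colVal_cutPeaks_replicate_append_zero (m : ℕ) (p : List Step) :
    colVal (cutPeaks (replicate m Step.N ++ Step.E :: p)) 0 = 2 * m - if m = 0 then 0 else 1 := by
  cases m with
  | zero => simp [cutPeaks, colVal]
  | succ m => simp [cutPeaks_replicate_succ_append, colVal_replicate_append, colVal]; omega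

lemma colVal_cutPeaks_replicate_append_succ (m : ℕ) (p : List Step) (x : ℕ) :
    colVal (cutPeaks (replicate m Step.N ++ Step.E :: p)) (x + 1) =
      2 * m + colVal (cutPeaks p) x := by
  cases m with
  | zero => simp [cutPeaks, colVal]
  | succ m => simp [cutPeaks_replicate_succ_append, colVal_replicate_append, colVal]; omega

def staircase (g : ℕ → ℕ) (n : ℕ) : List Step :=
  (range n).flatMap fun x => replicate (g (x + 1) - g x) Step.N ++ [Step.E]

lemma staircase_succ (g : ℕ → ℕ) (n : ℕ) :
    staircase g (n + 1) =
      replicate (g 1 - g 0) Step.N ++ Step.E :: staircase (fun x => g (x + 1)) n := by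
  simp [staircase, range_succ_eq_map, flatMap_map]

lemma eLen_staircase (g : ℕ → ℕ) (n : ℕ) : eLen (staircase g n) = n := by
  induction n generalizing g with
  | zero => rfl
  | succ n ih => simp [staircase_succ, ih]

lemma nLen_staircase {g : ℕ → ℕ} (hg : Monotone g) (n : ℕ) :
    nLen (staircase g n) = g n - g 0 := by
  induction n generalizing g with
  | zero => simp [staircase]
  | succ n ih =>
    have := hg (Nat.zero_le 1)
    have := hg (Nat.le_add_left 1 n)
    simp [staircase_succ, ih (fun _ _ h => hg (Nat.add_le_add_right h 1))]
    omega

lemma colVal_cutPeaks_staircase {g : ℕ → ℕ} (hg : Monotone g) {n x : ℕ} (hx : x < n) :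
    colVal (cutPeaks (staircase g n)) x =
      2 * (g (x + 1) - g 0) - if g (x + 1) = g x then 0 else 1 := by
  induction n generalizing g x with
  | zero => omega
  | succ n ih =>
    rw [staircase_succ]
    cases x with
    | zero =>
      have := hg (Nat.zero_le 1)
      rw [colVal_cutPeaks_replicate_append_zero]
      simp only [zero_add]
      split_ifs <;> omega
    | succ x =>
      rw [colVal_cutPeaks_replicate_append_succ,
        ih (fun _ _ h => hg (Nat.add_le_add_right h 1)) (by omega)]
      have : g 0 ≤ g 1 := hg (by omega)
      have : g 1 ≤ g (x + 1) := hg (by omega)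
      have : g (x + 1) ≤ g (x + 1 + 1) := hg (by omega)
      simp only [zero_add]
      split_ifs <;> omega

/-- `⌈x a / b⌉`, the height at which `nuAB a b` reaches abscissa `x`. -/
def lineCeil (a b x : ℕ) : ℕ := (x * a + b - 1) / b

lemma nuAB_eq_staircase (a b : ℕ) : nuAB a b = staircase (lineCeil a b) b := rfl

@[simp] lemma lineCeil_zero (a b : ℕ) : lineCeil a b 0 = 0 := by
  simp only [lineCeil, Nat.div_eq_zero_iff]
  omega

lemma eLen_nuAB (a b : ℕ) : eLen (nuAB a b) = b := by
  rw [nuAB_eq_staircase, eLen_staircase]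

section LineCeil

variable {a b : ℕ}

lemma lineCeil_le_iff (hb : 0 < b) {x y : ℕ} : lineCeil a b x ≤ y ↔ a * x ≤ b * y := by
  rw [lineCeil, Nat.div_le_iff_le_mul_add_pred hb, mul_comm x a, mul_comm b y]
  omega

lemma monotone_lineCeil (hb : 0 < b) : Monotone (lineCeil a b) := fun _ _ h =>
  (lineCeil_le_iff hb).2 <| (Nat.mul_le_mul_left a h).trans ((lineCeil_le_iff hb).1 le_rfl)

lemma lineCeil_self (hb : 0 < b) : lineCeil a b b = a := by
  refine le_antisymm ((lineCeil_le_iff hb).2 (mul_comm a b).le) (Nat.le_of_not_lt fun h => ?_)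
  have := (lineCeil_le_iff hb).1 (show lineCeil a b b ≤ a - 1 by omega)
  rw [mul_comm] at this
  have := Nat.le_of_mul_le_mul_left this hb
  omega

lemma nLen_nuAB (hb : 0 < b) : nLen (nuAB a b) = a := by
  rw [nuAB_eq_staircase, nLen_staircase (monotone_lineCeil hb), lineCeil_self hb,
    lineCeil_zero, Nat.sub_zero]

lemma colVal_cutPeaks_nuAB (hb : 0 < b) {x : ℕ} (hx : x < b) :
    colVal (cutPeaks (nuAB a b)) x =
      2 * lineCeil a b (x + 1) - if lineCeil a b (x + 1) = lineCeil a b x then 0 else 1 := by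
  rw [nuAB_eq_staircase, colVal_cutPeaks_staircase (monotone_lineCeil hb) hx,
    lineCeil_zero, Nat.sub_zero]

end LineCeil

theorem weaklyAbove_cutPeaks_nuAB_iff {a b : ℕ} (hb : 0 < b) {π : List Step}
    (he : eLen π = b) (hn : nLen π = a) :
    WeaklyAbove π (cutPeaks (nuAB a b)) ↔ ∀ t, t <+: π → a * eLen t ≤ b * nLen t := by
  constructor
  · rintro h t ⟨r, rfl⟩
    rcases Nat.eq_zero_or_pos (eLen t) with h0 | h0
    · simp [h0]
    -- the constraint on the column of the last non-`N` step of `t`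
    obtain ⟨t', s, q, rfl, hs, ht'⟩ :=
      exists_eq_append_cons_of_lt_eLen (p := t) (x := eLen t - 1) (by omega)
    simp only [eLen_append, eLen_cons, if_neg hs] at ht' he
    have hcol := h (eLen t')
    rw [colVal_cutPeaks_nuAB hb (by omega), append_assoc, cons_append,
      colVal_append_cons _ hs] at hcol
    have : lineCeil a b (eLen t' + 1) ≤ nLen (t' ++ s :: q) := by
      cases s <;> simp at hs hcol ⊢ <;> split_ifs at hcol <;> omega
    rw [lineCeil_le_iff hb] at this
    simpa [hs, show eLen q = 0 by omega] using this
  · intro h x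
    by_cases hx : x < b
    · obtain ⟨t, s, q, rfl, hs, rfl⟩ := exists_eq_append_cons_of_lt_eLen (he ▸ hx)
      have h1 := (lineCeil_le_iff hb).2 (h t (prefix_append _ _))
      have h2 := (lineCeil_le_iff hb).2 (h (t ++ [s]) (by simp))
      have := monotone_lineCeil (a := a) hb (Nat.le_succ (eLen t))
      rw [colVal_cutPeaks_nuAB hb hx, colVal_append_cons _ hs]
      cases s <;> simp at hs h2 ⊢ <;> split_ifs <;> omega
    · rw [colVal_of_eLen_le (by rw [eLen_cutPeaks, eLen_nuAB]; omega),
        colVal_of_eLen_le (by omega), nLen_cutPeaks, nLen_nuAB hb, hn]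

section CycleLemma

variable {α : Type*}

lemma List.forall_prefix_append_iff {P : List α → Prop} {u v : List α} :
    (∀ t, t <+: u ++ v → P t) ↔ (∀ t, t <+: u → P t) ∧ ∀ s, s <+: v → P (u ++ s) := by
  refine ⟨fun h => ⟨fun t ht => h t (ht.trans (prefix_append _ _)),
    fun s hs => h _ ((prefix_append_right_inj u).2 hs)⟩, ?_⟩
  rintro ⟨hu, hv⟩ t ⟨r, hr⟩
  rcases append_eq_append_iff.1 hr with ⟨u', rfl, -⟩ | ⟨v', rfl, rfl⟩
  · exact hu t (prefix_append _ _)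
  · exact hv v' (prefix_append _ _)

def PrefixSumsNonneg (f : α → ℤ) (l : List α) : Prop :=
  ∀ t, t <+: l → 0 ≤ (t.map f).sum

instance (f : α → ℤ) : DecidablePred (PrefixSumsNonneg f) := fun l =>
  decidable_of_iff (∀ t ∈ l.inits, 0 ≤ (t.map f).sum) (by simp [PrefixSumsNonneg])

variable {f : α → ℤ}

lemma prefixSumsNonneg_append_comm_iff {u v : List α} (h : ((u ++ v).map f).sum = 0) :
    PrefixSumsNonneg f (v ++ u) ↔ ∀ t, t <+: u ++ v → (u.map f).sum ≤ (t.map f).sum := by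
  simp only [PrefixSumsNonneg, forall_prefix_append_iff, map_append, List.sum_append] at h ⊢
  constructor <;> rintro ⟨h₁, h₂⟩
  · exact ⟨fun t ht => by linarith [h₂ t ht], fun t ht => by linarith [h₁ t ht]⟩
  · exact ⟨fun t ht => by linarith [h₂ t ht], fun t ht => by linarith [h₁ t ht]⟩

lemma prefixSumsNonneg_rotate_iff {w : List α} (hw : (w.map f).sum = 0) {j : ℕ}
    (hj : j ≤ w.length) :
    PrefixSumsNonneg f (w.rotate j) ↔
      ∀ t, t <+: w → ((w.take j).map f).sum ≤ (t.map f).sum := by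
  rw [rotate_eq_drop_append_take hj, prefixSumsNonneg_append_comm_iff (by rwa [take_append_drop]),
    take_append_drop]

/-- The cycle lemma of Dvoretzky and Motzkin. -/
theorem existsUnique_rotate_prefixSumsNonneg {w : List α} (hlen : 0 < w.length)
    (hw : (w.map f).sum = 0)
    (hinj : ∀ j < w.length, ∀ k < w.length,
      ((w.take j).map f).sum = ((w.take k).map f).sum → j = k) :
    ∃! j, j < w.length ∧ PrefixSumsNonneg f (w.rotate j) := by
  have good_iff_min : ∀ j < w.length, PrefixSumsNonneg f (w.rotate j) ↔
      ∀ k < w.length, ((w.take j).map f).sum ≤ ((w.take k).map f).sum := by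
    intro j hj
    rw [prefixSumsNonneg_rotate_iff hw hj.le]
    refine ⟨fun h k _ => h _ (take_prefix _ _), fun h t ht => ?_⟩
    rw [prefix_iff_eq_take.1 ht]
    rcases (ht.length_le).lt_or_eq with hlt | heq
    · exact h _ hlt
    · simpa [heq, hw] using h 0 hlen
  obtain ⟨j, hj, hmin⟩ := (Finset.range w.length).exists_min_image
    (fun k => ((w.take k).map f).sum) ⟨0, Finset.mem_range.2 hlen⟩
  rw [Finset.mem_range] at hj
  refine ⟨j, ⟨hj, (good_iff_min j hj).2 fun k hk => hmin k (Finset.mem_range.2 hk)⟩, ?_⟩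
  rintro k ⟨hk, hgood⟩
  exact hinj k hk j hj (le_antisymm ((good_iff_min k hk).1 hgood j hj) (hmin k (Finset.mem_range.2 hk)))

theorem card_eq_card_filter_prefixSumsNonneg_mul {W : Finset (List α)} {n : ℕ} (hn : 0 < n)
    (hlen : ∀ w ∈ W, w.length = n) (hrot : ∀ w ∈ W, ∀ j, w.rotate j ∈ W)
    (hsum : ∀ w ∈ W, (w.map f).sum = 0)
    (hinj : ∀ w ∈ W, ∀ j < n, ∀ k < n,
      ((w.take j).map f).sum = ((w.take k).map f).sum → j = k) :
    W.card = (W.filter (PrefixSumsNonneg f)).card * n := by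
  -- Count the pairs `(w, j)` with `w.rotate j` good in two ways: each `w` has exactly one such
  -- `j`, and `(w, j) ↦ (w.rotate j, j)` is a bijection onto the good words times `range n`.
  set P := (W ×ˢ Finset.range n).filter fun p => PrefixSumsNonneg f (p.1.rotate p.2)
  have hP : P.card = W.card := by
    rw [Finset.card_filter, Finset.sum_product, Finset.card_eq_sum_ones]
    refine Finset.sum_congr rfl fun w hw => ?_
    obtain ⟨j, ⟨hj, hgood⟩, huniq⟩ := existsUnique_rotate_prefixSumsNonneg
      ((hlen w hw).symm ▸ hn) (hsum w hw) ((hlen w hw).symm ▸ hinj w hw)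
    rw [← Finset.card_filter, Finset.card_eq_one]
    refine ⟨j, Finset.ext fun k => ?_⟩
    simp only [Finset.mem_filter, Finset.mem_range, Finset.mem_singleton]
    exact ⟨fun hk => huniq k (by rwa [hlen w hw]), by rintro rfl; exact ⟨hlen w hw ▸ hj, hgood⟩⟩
  rw [← hP, ← Finset.card_range n, ← Finset.card_product]
  refine Finset.card_nbij' (fun p => (p.1.rotate p.2, p.2)) (fun p => (p.1.rotate (n - p.2), p.2))
    ?_ ?_ ?_ ?_
  all_goals
    rintro ⟨w, j⟩ hp
    simp only [P, Finset.mem_coe, Finset.mem_filter, Finset.mem_product, Finset.mem_range,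
      Prod.mk.injEq, and_true] at hp ⊢
  · exact ⟨⟨hrot w hp.1.1 j, hp.2⟩, hp.1.2⟩
  · refine ⟨⟨hrot w hp.1.1 _, hp.2⟩, ?_⟩
    rw [rotate_rotate, Nat.sub_add_cancel hp.2.le, ← hlen w hp.1.1, rotate_length]
    exact hp.1.2
  · rw [rotate_rotate, Nat.add_sub_cancel' hp.1.2.le, ← hlen w hp.1.1, rotate_length]
  · rw [rotate_rotate, Nat.sub_add_cancel hp.2.le, ← hlen w hp.1.1, rotate_length]

end CycleLemma

section Multinomial

variable {α : Type*} [DecidableEq α]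

lemma prod_factorial_count_cons [Fintype α] (a : α) (m : Multiset α) :
    ∏ b, ((a ::ₘ m).count b)! = (m.count a + 1) * ∏ b, (m.count b)! := by
  rw [← Finset.mul_prod_erase _ _ (Finset.mem_univ a),
    ← Finset.mul_prod_erase _ (fun b => (m.count b)!) (Finset.mem_univ a),
    Finset.prod_congr rfl fun b hb => by rw [Multiset.count_cons_of_ne (Finset.ne_of_mem_erase hb)],
    Multiset.count_cons_self, factorial_succ, mul_assoc]

lemma toFinset_lists_eq_biUnion (m : Multiset α) (hm : m ≠ 0) :
    m.lists.toFinset =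
      m.toFinset.biUnion fun a => (m.erase a).lists.toFinset.map ⟨cons a, cons_injective⟩ := by
  ext l
  simp only [Multiset.mem_toFinset, Multiset.mem_lists_iff, Multiset.quot_mk_to_coe,
    Finset.mem_biUnion, Finset.mem_map, Function.Embedding.coeFn_mk]
  constructor
  · rintro rfl
    obtain ⟨a, l, rfl⟩ := exists_cons_of_ne_nil (by simpa using hm)
    exact ⟨a, by simp, l, by simp, rfl⟩
  · rintro ⟨a, ha, l, hl, rfl⟩
    rw [← Multiset.cons_erase ha, hl, Multiset.cons_coe]

theorem card_toFinset_lists_mul_prod_factorial [Fintype α] (m : Multiset α) :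
    m.lists.toFinset.card * ∏ a, (m.count a)! = (Multiset.card m)! := by
  induction h : Multiset.card m generalizing m with
  | zero =>
    rw [Multiset.card_eq_zero.1 h, ← Multiset.coe_nil, Multiset.lists_coe]
    simp
  | succ n ih =>
    have hm : m ≠ 0 := by rintro rfl; simp at h
    rw [toFinset_lists_eq_biUnion m hm, Finset.card_biUnion, Finset.sum_mul]
    · calc ∑ a ∈ m.toFinset, ((m.erase a).lists.toFinset.map _).card * ∏ b, (m.count b)!
          = ∑ a ∈ m.toFinset, m.count a * n ! := Finset.sum_congr rfl fun a ha => by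
            have ha := Multiset.mem_toFinset.1 ha
            rw [Finset.card_map, ← Multiset.cons_erase ha, prod_factorial_count_cons,
              Multiset.count_cons_self, Multiset.erase_cons_head, mul_left_comm,
              ih _ (by rw [Multiset.card_erase_of_mem ha, h]; rfl)]
        _ = (n + 1)! := by rw [← Finset.sum_mul, Multiset.toFinset_sum_count_eq, h, factorial_succ]
    · intro a _ a' _ haa'
      simp only [Function.onFun, Finset.disjoint_left, Finset.mem_map, not_exists, not_and,
        Function.Embedding.coeFn_mk]
      rintro _ ⟨l, -, rfl⟩ l' - h
      exact haa' (cons_eq_cons.1 h).1.symm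

end Multinomial

lemma List.Sublist.eLen_le {p q : List Step} (h : p <+ q) : eLen p ≤ eLen q :=
  Nat.add_le_add (h.count_le _) (h.count_le _)

/-- Coprimality: the segment from `(0,0)` to `(b,a)` meets no other lattice point. -/
lemma List.Sublist.eq_nil_or_length_eq {a b : ℕ} (hb : 0 < b) (hco : a.Coprime b)
    {p w : List Step} (hpw : p <+ w) (he : eLen w = b) (hn : nLen w = a)
    (h : b * nLen p = a * eLen p) : p = [] ∨ p.length = w.length := by
  have hdvd : b ∣ eLen p := hco.symm.dvd_of_dvd_mul_left ⟨nLen p, h.symm⟩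
  rcases Nat.eq_zero_or_pos (eLen p) with h0 | hpos
  · rw [h0, mul_zero, mul_eq_zero] at h
    exact .inl (eq_nil_of_eLen_eq_zero_of_nLen_eq_zero h0 (h.resolve_left hb.ne'))
  · have he' : eLen p = b := le_antisymm (he ▸ hpw.eLen_le) (Nat.le_of_dvd hpos hdvd)
    have hn' : nLen p = a := by
      rw [he'] at h; exact Nat.eq_of_mul_eq_mul_left hb (h.trans (mul_comm a b))
    exact .inr (hpw.length_eq_of_eLen_eq_of_nLen_eq (he'.trans he.symm) (hn'.trans hn.symm))

/-- A path from the origin ends weakly above the line `b y = a x` iff its weight is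
nonnegative. -/
def lineWeight (a b : ℕ) : Step → ℤ
  | .N => b
  | .E => -a
  | .D => b - a

lemma sum_map_lineWeight (a b : ℕ) (p : List Step) :
    (p.map (lineWeight a b)).sum = b * nLen p - a * eLen p := by
  induction p with
  | nil => simp
  | cons s p ih => cases s <;> simp [lineWeight, ih] <;> ring

lemma prefixSumsNonneg_lineWeight_iff {a b : ℕ} {p : List Step} :
    PrefixSumsNonneg (lineWeight a b) p ↔ ∀ t, t <+: p → a * eLen t ≤ b * nLen t := by
  simp only [PrefixSumsNonneg, sum_map_lineWeight, sub_nonneg]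
  exact_mod_cast Iff.rfl

lemma sum_take_lineWeight_injective {a b : ℕ} (hb : 0 < b) (hco : a.Coprime b) {w : List Step}
    (he : eLen w = b) (hn : nLen w = a) {j k : ℕ} (hj : j < w.length) (hk : k < w.length)
    (h : ((w.take j).map (lineWeight a b)).sum = ((w.take k).map (lineWeight a b)).sum) :
    j = k := by
  wlog hjk : j ≤ k generalizing j k
  · exact (this hk hj h.symm (by omega)).symm
  set mid := (w.take k).drop j
  have hsplit : w.take k = w.take j ++ mid := by
    rw [← take_append_drop j (w.take k), take_take, min_eq_left hjk]
  have hmid : b * nLen mid = a * eLen mid := by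
    rw [hsplit, map_append, List.sum_append, left_eq_add, sum_map_lineWeight, sub_eq_zero] at h
    exact_mod_cast h
  have hlen : mid.length = k - j := by rw [length_drop, length_take]; omega
  have hsub : mid <+ w := (drop_sublist _ _).trans (take_sublist _ _)
  rcases hsub.eq_nil_or_length_eq hb hco he hn hmid with hnil | hfull
  · rw [hnil, length_nil] at hlen; omega
  · omega

instance : Fintype Step := ⟨{.N, .E, .D}, fun s => by cases s <;> simp⟩

def stepMultiset (p q r : ℕ) : Multiset Step :=
  Multiset.replicate p .N + Multiset.replicate q .E + Multiset.replicate r .D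

lemma mem_toFinset_lists_stepMultiset {p q r : ℕ} {l : List Step} :
    l ∈ (stepMultiset p q r).lists.toFinset ↔
      l.count .N = p ∧ l.count .E = q ∧ l.count .D = r := by
  simp only [Multiset.mem_toFinset, Multiset.mem_lists_iff, Multiset.quot_mk_to_coe,
    Multiset.ext, Multiset.coe_count]
  refine ⟨fun h => ⟨?_, ?_, ?_⟩, fun ⟨hN, hE, hD⟩ s => ?_⟩
  · simpa [stepMultiset, Multiset.count_replicate] using (h .N).symm
  · simpa [stepMultiset, Multiset.count_replicate] using (h .E).symm
  · simpa [stepMultiset, Multiset.count_replicate] using (h .D).symm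
  · cases s <;> simp [stepMultiset, Multiset.count_replicate, *]

lemma card_toFinset_lists_stepMultiset (p q r : ℕ) :
    (stepMultiset p q r).lists.toFinset.card * (p ! * q ! * r !) = (p + q + r)! := by
  have h := card_toFinset_lists_mul_prod_factorial (stepMultiset p q r)
  have huniv : (Finset.univ : Finset Step) = {.N, .E, .D} := rfl
  simpa [huniv, stepMultiset, Multiset.count_replicate, mul_assoc] using h

def rectPaths (a b i : ℕ) : Finset (List Step) :=
  (stepMultiset (a - i) (b - i) i).lists.toFinset

section LargeCount

variable {a b i : ℕ}

lemma mem_rectPaths (hia : i ≤ a) (hib : i ≤ b) {π : List Step} :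
    π ∈ rectPaths a b i ↔ eLen π = b ∧ nLen π = a ∧ π.count .D = i := by
  rw [rectPaths, mem_toFinset_lists_stepMultiset, eLen, nLen]
  omega

lemma largeCount_eq_card_filter (hb : 0 < b) (hia : i ≤ a) (hib : i ≤ b) :
    largeCount a b i =
      ((rectPaths a b i).filter (PrefixSumsNonneg (lineWeight a b))).card := by
  rw [largeCount, ← Nat.card_eq_finsetCard]
  refine Nat.card_congr (Equiv.subtypeEquivRight fun π => ?_)
  rw [Finset.mem_filter, mem_rectPaths hia hib, prefixSumsNonneg_lineWeight_iff,
    IsLargeSchroder, eLen_nuAB, nLen_nuAB hb]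
  constructor
  · rintro ⟨⟨he, hn, hw⟩, hd⟩
    exact ⟨⟨he, hn, hd⟩, (weaklyAbove_cutPeaks_nuAB_iff hb he hn).1 hw⟩
  · rintro ⟨⟨he, hn, hd⟩, hw⟩
    exact ⟨⟨he, hn, (weaklyAbove_cutPeaks_nuAB_iff hb he hn).2 hw⟩, hd⟩

lemma card_rectPaths_eq_largeCount_mul (hb : 0 < b) (hco : a.Coprime b) (hia : i ≤ a)
    (hib : i ≤ b) : (rectPaths a b i).card = largeCount a b i * (a + b - i) := by
  have hlen : ∀ w ∈ rectPaths a b i, w.length = a + b - i := by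
    intro w hw
    obtain ⟨he, hn, hd⟩ := (mem_rectPaths hia hib).1 hw
    rw [length_eq_count_add]
    rw [eLen] at he
    rw [nLen] at hn
    omega
  rw [largeCount_eq_card_filter hb hia hib]
  refine card_eq_card_filter_prefixSumsNonneg_mul (by omega) hlen ?_ ?_ ?_
  · intro w hw j
    simpa only [mem_rectPaths hia hib, eLen, nLen, (rotate_perm w j).count_eq] using hw
  · intro w hw
    obtain ⟨he, hn, -⟩ := (mem_rectPaths hia hib).1 hw
    rw [sum_map_lineWeight, he, hn, mul_comm, sub_self]
  · intro w hw j hj k hk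
    obtain ⟨he, hn, -⟩ := (mem_rectPaths hia hib).1 hw
    exact sum_take_lineWeight_injective hb hco he hn (hlen w hw ▸ hj) (hlen w hw ▸ hk)

lemma card_rectPaths_mul (hia : i ≤ a) (hib : i ≤ b) :
    (rectPaths a b i).card * ((a - i)! * (b - i)! * i !) = (a + b - i)! := by
  rw [rectPaths, card_toFinset_lists_stepMultiset, show a - i + (b - i) + i = a + b - i by omega]

lemma largeCount_eq_zero (hb : 0 < b) (h : a < i ∨ b < i) : largeCount a b i = 0 := by
  refine Nat.card_eq_zero.2 (.inl ⟨fun ⟨π, ⟨he, hn, _⟩, hd⟩ => ?_⟩)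
  rw [eLen_nuAB, eLen] at he
  rw [nLen_nuAB hb, nLen] at hn
  omega

end LargeCount

lemma mul_eq_choose_mul_choose {a b i S : ℕ} (hia : i ≤ a) (hib : i ≤ b)
    (h : S * (a + b - i) * ((a - i)! * (b - i)! * i !) = (a + b - i)!) :
    a * S = a.choose i * (a + b - 1 - i).choose (b - i) := by
  obtain ⟨m, rfl⟩ := Nat.exists_eq_add_of_le hia
  obtain ⟨k, rfl⟩ := Nat.exists_eq_add_of_le hib
  rw [show i + m + (i + k) - i = i + m + k by omega, Nat.add_sub_cancel_left,
    Nat.add_sub_cancel_left] at h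
  rcases Nat.eq_zero_or_pos (i + m) with ha | ha
  · obtain ⟨rfl, rfl⟩ : i = 0 ∧ m = 0 := by omega
    cases k with
    | zero => simp at h
    | succ k => simp
  obtain ⟨c, hc⟩ : ∃ c, i + m = c + 1 := ⟨i + m - 1, by omega⟩
  rw [show i + m + (i + k) - 1 - i = c + k by omega, Nat.add_sub_cancel_left]
  rw [hc] at h
  apply Nat.eq_of_mul_eq_mul_left (show 0 < m ! * i ! * k ! * c ! * (c + 1 + k) by positivity)
  calc _ = (c + 1) * c ! * (S * (c + 1 + k) * (m ! * k ! * i !)) := by rw [hc]; ring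
    _ = (i + m)! * ((c + k + 1) * (c + k)!) := by
      rw [h, ← factorial_succ, hc, add_right_comm, ← factorial_succ]
    _ = _ := by
      rw [Nat.choose_symm_add, ← Nat.add_choose_mul_factorial_mul_factorial i m,
        ← Nat.add_choose_mul_factorial_mul_factorial c k]
      ring

lemma chooseZ_sub_of_le {n m k : ℕ} (h : k ≤ m) : chooseZ n ((m : ℤ) - k) = n.choose (m - k) := by
  rw [chooseZ, if_pos (by omega)]
  congr
  omega

lemma chooseZ_sub_of_lt {n m k : ℕ} (h : m < k) : chooseZ n ((m : ℤ) - k) = 0 := by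
  rw [chooseZ, if_neg (by omega)]

theorem largeCount_formula_general (a b i : ℕ) (hb : 0 < b) (hco : Nat.Coprime a b) :
    a * largeCount a b i = Nat.choose a i * chooseZ (a + b - 1 - i) ((b : ℤ) - i) ∧
    b * largeCount a b i = Nat.choose b i * chooseZ (a + b - 1 - i) ((a : ℤ) - i) := by
  by_cases h : i ≤ a ∧ i ≤ b
  · obtain ⟨hia, hib⟩ := h
    have hS := card_rectPaths_mul hia hib
    rw [card_rectPaths_eq_largeCount_mul hb hco hia hib] at hS
    rw [chooseZ_sub_of_le hib, chooseZ_sub_of_le hia]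
    refine ⟨mul_eq_choose_mul_choose hia hib hS, ?_⟩
    rw [add_comm a b] at hS ⊢
    exact mul_eq_choose_mul_choose hib hia (by rwa [mul_comm ((b - i)!)])
  · rw [largeCount_eq_zero hb (by omega), mul_zero, mul_zero]
    rcases not_and_or.1 h with hai | hbi <;> rw [Nat.not_le] at *
    · rw [Nat.choose_eq_zero_of_lt hai, chooseZ_sub_of_lt hai, zero_mul, mul_zero]
      exact ⟨rfl, rfl⟩
    · rw [Nat.choose_eq_zero_of_lt hbi, chooseZ_sub_of_lt hbi, zero_mul, mul_zero]
      exact ⟨rfl, rfl⟩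

/-- For coprime positive `a, b` and `0 ≤ i ≤ a`, the number of large
`(a,b)`-Schröder paths with exactly `i` diagonal steps satisfies
`Sch(a,b,i) = (1/a)·C(a,i)·C(a+b−1−i, b−i) = (1/b)·C(b,i)·C(a+b−1−i, a−i)`. -/
theorem largeCount_formula (a b i : ℕ) (ha : 0 < a) (hb : 0 < b)
    (hco : Nat.Coprime a b) (hi : i ≤ a) :
    a * largeCount a b i = Nat.choose a i * chooseZ (a + b - 1 - i) ((b : ℤ) - i) ∧
    b * largeCount a b i = Nat.choose b i * chooseZ (a + b - 1 - i) ((a : ℤ) - i) :=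
  largeCount_formula_general a b i hb hco
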